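/- Let A be an associative unital algebra over ℂ with a comultiplication Δ, let h ∈ A be a left cointegral (a nonzero element with Δ(a)(1 ⊗ h) = a ⊗ h for all a ∈ A), and assume the right leg of Δ is all of A. Then there exists an algebra homomorphism ε : A → ℂ such that for all a ∈ A: a·h = ε(a)·h, (id ⊗ ε)(Δ(a)) = a, (ε ⊗ id)(Δ(a)) = a, and Δ(a)(h ⊗ 1) = h ⊗ a. -/
import Mathlib


open TensorProduct

noncomputable section

variable {A : Type*} [Ring A] [Algebra ℂ A]

/-- The slice map `id ⊗ ω : A ⊗ A → A`. -/
def sliceR (ω : A →ₗ[ℂ] ℂ) : A ⊗[ℂ] A →ₗ[ℂ] A :=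
  (TensorProduct.rid ℂ A).toLinearMap ∘ₗ TensorProduct.map LinearMap.id ω

/-- The slice map `ω ⊗ id : A ⊗ A → A`. -/
def sliceL (ω : A →ₗ[ℂ] ℂ) : A ⊗[ℂ] A →ₗ[ℂ] A :=
  (TensorProduct.lid ℂ A).toLinearMap ∘ₗ TensorProduct.map ω LinearMap.id

/-- Coassociativity of a comultiplication `Δ : A → A ⊗ A`:
`(Δ ⊗ id) ∘ Δ = (id ⊗ Δ) ∘ Δ` (up to the associator). -/
def IsCoassoc (Δ : A →ₐ[ℂ] A ⊗[ℂ] A) : Prop :=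
  ∀ a : A,
    TensorProduct.assoc ℂ A A A (TensorProduct.map Δ.toLinearMap LinearMap.id (Δ a)) =
      TensorProduct.map LinearMap.id Δ.toLinearMap (Δ a)

/-- A left integral: a nonzero functional with `(id ⊗ φ)(Δ a) = φ(a)·1` for all `a`. -/
def IsLeftIntegral (Δ : A →ₐ[ℂ] A ⊗[ℂ] A) (φ : A →ₗ[ℂ] ℂ) : Prop :=
  φ ≠ 0 ∧ ∀ a : A, sliceR φ (Δ a) = φ a • (1 : A)

/-- A right integral: a nonzero functional with `(ψ ⊗ id)(Δ a) = ψ(a)·1` for all `a`. -/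
def IsRightIntegral (Δ : A →ₐ[ℂ] A ⊗[ℂ] A) (ψ : A →ₗ[ℂ] ℂ) : Prop :=
  ψ ≠ 0 ∧ ∀ a : A, sliceL ψ (Δ a) = ψ a • (1 : A)

/-- A faithful functional: the bilinear form `(a, b) ↦ ω(ab)` is non-degenerate. -/
def IsFaithful (ω : A →ₗ[ℂ] ℂ) : Prop :=
  (∀ b : A, (∀ a : A, ω (a * b) = 0) → b = 0) ∧
  (∀ b : A, (∀ a : A, ω (b * a) = 0) → b = 0)

/-- The left leg of an element `x ∈ A ⊗ A`: the span of `{(id ⊗ ω)(x) : ω ∈ A*}`. -/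
def leftLegOf (x : A ⊗[ℂ] A) : Submodule ℂ A :=
  Submodule.span ℂ {y : A | ∃ ω : A →ₗ[ℂ] ℂ, y = sliceR ω x}

/-- The right leg of an element `x ∈ A ⊗ A`: the span of `{(ω ⊗ id)(x) : ω ∈ A*}`. -/
def rightLegOf (x : A ⊗[ℂ] A) : Submodule ℂ A :=
  Submodule.span ℂ {y : A | ∃ ω : A →ₗ[ℂ] ℂ, y = sliceL ω x}

/-- The left leg of `Δ`: the span of `{(id ⊗ ω)(Δ a) : a ∈ A, ω ∈ A*}`. -/
def leftLeg (Δ : A →ₐ[ℂ] A ⊗[ℂ] A) : Submodule ℂ A :=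
  Submodule.span ℂ {y : A | ∃ (a : A) (ω : A →ₗ[ℂ] ℂ), y = sliceR ω (Δ a)}

/-- The right leg of `Δ`: the span of `{(ω ⊗ id)(Δ a) : a ∈ A, ω ∈ A*}`. -/
def rightLeg (Δ : A →ₐ[ℂ] A ⊗[ℂ] A) : Submodule ℂ A :=
  Submodule.span ℂ {y : A | ∃ (a : A) (ω : A →ₗ[ℂ] ℂ), y = sliceL ω (Δ a)}

/-- A comultiplication is full if both of its legs are all of `A`. -/
def IsFull (Δ : A →ₐ[ℂ] A ⊗[ℂ] A) : Prop :=
  leftLeg Δ = ⊤ ∧ rightLeg Δ = ⊤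

/-- The linear map `T₁` with `T₁ (a ⊗ b) = Δ(a) * (1 ⊗ b)`. -/
def T1 (Δ : A →ₐ[ℂ] A ⊗[ℂ] A) : A ⊗[ℂ] A →ₗ[ℂ] A ⊗[ℂ] A :=
  LinearMap.mul' ℂ (A ⊗[ℂ] A) ∘ₗ
    TensorProduct.map Δ.toLinearMap (TensorProduct.mk ℂ A A 1)

/-- The linear map `T₁'` with `T₁' (a ⊗ b) = Δ(a) * (b ⊗ 1)`. -/
def T1' (Δ : A →ₐ[ℂ] A ⊗[ℂ] A) : A ⊗[ℂ] A →ₗ[ℂ] A ⊗[ℂ] A :=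
  LinearMap.mul' ℂ (A ⊗[ℂ] A) ∘ₗ
    TensorProduct.map Δ.toLinearMap ((TensorProduct.mk ℂ A A).flip 1)

/-- The linear map `T₂` with `T₂ (a ⊗ b) = (a ⊗ 1) * Δ(b)`. -/
def T2 (Δ : A →ₐ[ℂ] A ⊗[ℂ] A) : A ⊗[ℂ] A →ₗ[ℂ] A ⊗[ℂ] A :=
  LinearMap.mul' ℂ (A ⊗[ℂ] A) ∘ₗ
    TensorProduct.map ((TensorProduct.mk ℂ A A).flip 1) Δ.toLinearMap

/-- The linear map `T₂'` with `T₂' (a ⊗ b) = (1 ⊗ a) * Δ(b)`. -/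
def T2' (Δ : A →ₐ[ℂ] A ⊗[ℂ] A) : A ⊗[ℂ] A →ₗ[ℂ] A ⊗[ℂ] A :=
  LinearMap.mul' ℂ (A ⊗[ℂ] A) ∘ₗ
    TensorProduct.map (TensorProduct.mk ℂ A A 1) Δ.toLinearMap

/-- A left cointegral: a nonzero element `h` with `Δ(a)(1 ⊗ h) = a ⊗ h` for all `a`. -/
def IsLeftCointegral (Δ : A →ₐ[ℂ] A ⊗[ℂ] A) (h : A) : Prop :=
  h ≠ 0 ∧ ∀ a : A, Δ a * ((1 : A) ⊗ₜ[ℂ] h) = a ⊗ₜ[ℂ] h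

/-- A right cointegral: a nonzero element `k` with `(k ⊗ 1)Δ(a) = k ⊗ a` for all `a`. -/
def IsRightCointegral (Δ : A →ₐ[ℂ] A ⊗[ℂ] A) (k : A) : Prop :=
  k ≠ 0 ∧ ∀ a : A, (k ⊗ₜ[ℂ] (1 : A)) * Δ a = k ⊗ₜ[ℂ] a

/-- `Δ₁₃(a) = (1 ⊗ σ)(Δ(a) ⊗ 1)`, viewed in `A ⊗ (A ⊗ A)`. -/
def delta13 (Δ : A →ₐ[ℂ] A ⊗[ℂ] A) (a : A) : A ⊗[ℂ] (A ⊗[ℂ] A) :=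
  TensorProduct.map LinearMap.id (TensorProduct.comm ℂ A A).toLinearMap
    (TensorProduct.assoc ℂ A A A (Δ a ⊗ₜ[ℂ] (1 : A)))

lemma sliceL_tmul (ω : A →ₗ[ℂ] ℂ) (u v : A) : sliceL ω (u ⊗ₜ[ℂ] v) = ω u • v := by
  simp [sliceL]

lemma sliceR_tmul (ω : A →ₗ[ℂ] ℂ) (u v : A) : sliceR ω (u ⊗ₜ[ℂ] v) = ω v • u := by
  simp [sliceR]

lemma sliceL_mul_one_tmul (ω : A →ₗ[ℂ] ℂ) (c : A) (x : A ⊗[ℂ] A) :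
    sliceL ω (x * ((1:A) ⊗ₜ[ℂ] c)) = sliceL ω x * c := by
  induction x using TensorProduct.induction_on with
  | zero => simp
  | tmul u v => simp [Algebra.TensorProduct.tmul_mul_tmul, sliceL_tmul, smul_mul_assoc]
  | add x y hx hy => rw [add_mul, map_add, hx, hy, map_add, add_mul]

lemma sliceL_map_id (ω : A →ₗ[ℂ] ℂ) (f : A →ₗ[ℂ] A) (x : A ⊗[ℂ] A) :
    sliceL ω (TensorProduct.map f LinearMap.id x) = sliceL (ω ∘ₗ f) x := by
  induction x using TensorProduct.induction_on with
  | zero => simp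
  | tmul u v => simp [sliceL_tmul]
  | add x y hx hy => rw [map_add, map_add, hx, hy, map_add]

/-- Coassociativity consequence: `Δ ((ω ⊗ id)(Δ a)) = ((ω∘Δ) ⊗ id)(Δ a)`. -/
lemma comul_sliceL (Δ : A →ₐ[ℂ] A ⊗[ℂ] A) (hΔ : IsCoassoc Δ) (a : A) (ω : A →ₗ[ℂ] ℂ) :
    Δ (sliceL ω (Δ a)) =
      TensorProduct.map (sliceL ω ∘ₗ Δ.toLinearMap) LinearMap.id (Δ a) := by
  set F : A ⊗[ℂ] (A ⊗[ℂ] A) →ₗ[ℂ] A ⊗[ℂ] A :=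
    (TensorProduct.lid ℂ (A ⊗[ℂ] A)).toLinearMap ∘ₗ TensorProduct.map ω LinearMap.id with hF
  have h1 : ∀ y : A ⊗[ℂ] A,
      F (TensorProduct.map LinearMap.id Δ.toLinearMap y) = Δ (sliceL ω y) := by
    intro y
    induction y using TensorProduct.induction_on with
    | zero => simp
    | tmul u v => simp [hF, sliceL_tmul]
    | add x y hx hy => rw [map_add, map_add, hx, hy, map_add, map_add]
  have h2 : ∀ (z : A ⊗[ℂ] A) (v : A),
      F (TensorProduct.assoc ℂ A A A (z ⊗ₜ[ℂ] v)) = (sliceL ω z) ⊗ₜ[ℂ] v := by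
    intro z v
    induction z using TensorProduct.induction_on with
    | zero =>
        rw [TensorProduct.zero_tmul, LinearEquiv.map_zero, map_zero, map_zero,
          TensorProduct.zero_tmul]
    | tmul p q => simp [hF, sliceL_tmul, TensorProduct.smul_tmul']
    | add x y hx hy =>
        rw [TensorProduct.add_tmul, map_add, map_add, hx, hy, map_add,
          TensorProduct.add_tmul]
    
  have h3 : ∀ y : A ⊗[ℂ] A,
      F (TensorProduct.assoc ℂ A A A (TensorProduct.map Δ.toLinearMap LinearMap.id y)) =
        TensorProduct.map (sliceL ω ∘ₗ Δ.toLinearMap) LinearMap.id y := by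
    intro y
    induction y using TensorProduct.induction_on with
    | zero => rw [map_zero, LinearEquiv.map_zero, map_zero, map_zero]
    | tmul u v =>
        rw [TensorProduct.map_tmul]
        simpa using h2 (Δ u) v
    | add x y hx hy =>
        rw [map_add, LinearEquiv.map_add, map_add, hx, hy, map_add]
  calc Δ (sliceL ω (Δ a)) = F (TensorProduct.map LinearMap.id Δ.toLinearMap (Δ a)) :=
        (h1 (Δ a)).symm
    _ = F (TensorProduct.assoc ℂ A A A
          (TensorProduct.map Δ.toLinearMap LinearMap.id (Δ a))) := by rw [hΔ a]
    _ = TensorProduct.map (sliceL ω ∘ₗ Δ.toLinearMap) LinearMap.id (Δ a) := h3 (Δ a)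

/-- If `h` is a left cointegral and the right leg of `Δ` is all of `A`, then there is an
algebra homomorphism `ε : A → ℂ` with `a·h = ε(a)·h`, `(id ⊗ ε)Δ(a) = a`, `(ε ⊗ id)Δ(a) = a`
and `Δ(a)(h ⊗ 1) = h ⊗ a` for all `a`. -/
theorem counit_from_left_cointegral
    (Δ : A →ₐ[ℂ] A ⊗[ℂ] A) (hΔ : IsCoassoc Δ)
    (h : A) (hh : IsLeftCointegral Δ h) (hleg : rightLeg Δ = ⊤) :
    ∃ ε : A →ₐ[ℂ] ℂ, ∀ a : A,
      a * h = ε a • h ∧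
      sliceR ε.toLinearMap (Δ a) = a ∧
      sliceL ε.toLinearMap (Δ a) = a ∧
      Δ a * (h ⊗ₜ[ℂ] (1 : A)) = h ⊗ₜ[ℂ] a := by
  obtain ⟨hne, hco⟩ := hh
  -- a functional φ with φ h = 1
  obtain ⟨φ, hφ⟩ : ∃ φ : A →ₗ[ℂ] ℂ, φ h = 1 := by
    have : ¬ ∀ ψ : Module.Dual ℂ A, ψ h = 0 := by
      rw [Module.forall_dual_apply_eq_zero_iff ℂ h]; exact hne
    push_neg at this
    obtain ⟨ψ, hψ⟩ := this
    exact ⟨(ψ h)⁻¹ • ψ, by simp [inv_mul_cancel₀ hψ]⟩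
  -- key identity A
  have hA : ∀ (a : A) (ω : A →ₗ[ℂ] ℂ), sliceL ω (Δ a) * h = ω a • h := by
    intro a ω
    have := congrArg (sliceL ω) (hco a)
    rwa [sliceL_mul_one_tmul, sliceL_tmul] at this
  -- every a*h lies in span {h}
  have hmem : ∀ a : A, a * h ∈ Submodule.span ℂ {h} := by
    have hsub : rightLeg Δ ≤ (Submodule.span ℂ {h}).comap (LinearMap.mulRight ℂ h) := by
      apply Submodule.span_le.2
      rintro y ⟨a, ω, rfl⟩
      have hm : sliceL ω (Δ a) * h ∈ Submodule.span ℂ {h} := by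
        rw [hA]
        exact Submodule.smul_mem _ _ (Submodule.mem_span_singleton_self h)
      exact hm
    intro a
    have ha : a ∈ rightLeg Δ := by rw [hleg]; trivial
    exact hsub ha
  set εl : A →ₗ[ℂ] ℂ := φ ∘ₗ LinearMap.mulRight ℂ h with hεl
  have key1 : ∀ a : A, a * h = εl a • h := by
    intro a
    obtain ⟨c, hc⟩ := Submodule.mem_span_singleton.1 (hmem a)
    have : εl a = c := by
      show φ (a * h) = c
      rw [← hc, map_smul, hφ, smul_eq_mul, mul_one]
    rw [this, hc]
  have hinj : ∀ c d : ℂ, c • h = d • h → c = d := by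
    intro c d hcd
    exact smul_left_injective ℂ hne hcd
  have hone : εl 1 = 1 := by simp [hεl, hφ]
  have hmul : ∀ a b : A, εl (a * b) = εl a * εl b := by
    intro a b
    apply hinj
    rw [← key1 (a * b), mul_assoc, key1 b, mul_smul_comm, key1 a, smul_smul, mul_comm]
  set ε : A →ₐ[ℂ] ℂ := AlgHom.ofLinearMap εl hone hmul with hε
  have hεcoe : ∀ a : A, ε a = εl a := fun a => rfl
  -- item 2
  have hB : ∀ x : A ⊗[ℂ] A, x * ((1:A) ⊗ₜ[ℂ] h) = (sliceR εl x) ⊗ₜ[ℂ] h := by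
    intro x
    induction x using TensorProduct.induction_on with
    | zero => simp
    | tmul u v =>
        rw [Algebra.TensorProduct.tmul_mul_tmul, mul_one, key1 v, sliceR_tmul,
          TensorProduct.tmul_smul, TensorProduct.smul_tmul']
    | add x y hx hy => rw [add_mul, hx, hy, map_add, TensorProduct.add_tmul]
  have item2 : ∀ a : A, sliceR εl (Δ a) = a := by
    intro a
    have : (sliceR εl (Δ a)) ⊗ₜ[ℂ] h = a ⊗ₜ[ℂ] h := by rw [← hB, hco a]
    have := congrArg (sliceR φ) this
    rwa [sliceR_tmul, sliceR_tmul, hφ, one_smul, one_smul] at this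
  -- key identity K : ε ∘ (sliceL ω ∘ Δ) = ω
  have hK : ∀ (a : A) (ω : A →ₗ[ℂ] ℂ), εl (sliceL ω (Δ a)) = ω a := by
    intro a ω
    apply hinj
    rw [← key1, hA]
  -- item 3
  have item3 : ∀ b : A, sliceL εl (Δ b) = b := by
    have hsub : rightLeg Δ ≤ LinearMap.eqLocus (sliceL εl ∘ₗ Δ.toLinearMap)
        (LinearMap.id : A →ₗ[ℂ] A) := by
      apply Submodule.span_le.2
      rintro y ⟨a, ω, rfl⟩
      show sliceL εl (Δ (sliceL ω (Δ a))) = sliceL ω (Δ a)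
      rw [comul_sliceL Δ hΔ a ω, sliceL_map_id]
      have : εl ∘ₗ (sliceL ω ∘ₗ Δ.toLinearMap) = ω := by
        ext x; exact hK x ω
      rw [LinearMap.comp_assoc] at this ⊢
      rw [this]
    intro b
    have hb : b ∈ rightLeg Δ := by rw [hleg]; trivial
    exact hsub hb
  -- item 4
  have hC : ∀ x : A ⊗[ℂ] A, x * (h ⊗ₜ[ℂ] (1:A)) = h ⊗ₜ[ℂ] (sliceL εl x) := by
    intro x
    induction x using TensorProduct.induction_on with
    | zero => simp
    | tmul u v =>
        rw [Algebra.TensorProduct.tmul_mul_tmul, mul_one, key1 u, sliceL_tmul,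
          TensorProduct.smul_tmul]
    | add x y hx hy => rw [add_mul, hx, hy, map_add, TensorProduct.tmul_add]
  refine ⟨ε, fun a => ⟨key1 a, ?_, ?_, ?_⟩⟩
  · exact item2 a
  · exact item3 a
  · rw [hC, item3 a]
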